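/- arXiv:math/0302231 — 2 statements merged into one kernel-verified Lean document; each statement's English description precedes it below -/
import Mathlib

section
/- Let (Ω(S),T) be a minimal, aperiodic, nonprimitive substitution dynamical system over {a,b} with |S(a)|>1 and S(b)=b. Then S(a) is neither a prefix of bS(a) nor a suffix of S(a)b. Consequently, any two 1-partitions of a finite word v∈W(S) which both begin with the block S(a) (respectively, both end with the block S(a)) agree except possibly on a suffix (respectively, prefix) of length at most |S(a)b|. -/
open List Filter Topology MeasureTheory

namespace SubstLR

variable {A : Type*}

/-- Apply the substitution `S` to a finite word. -/
def subst (S : A → List A) (w : List A) : List A := w.flatMap S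

/-- `iter S n w` is `S^n(w)`. -/
def iter (S : A → List A) (n : ℕ) (w : List A) : List A := (subst S)^[n] w

/-- The set `W(S)` of finite words associated to `S`. -/
def WS (S : A → List A) : Set (List A) := {w | ∃ (a : A) (n : ℕ), w <:+: iter S n [a]}

/-- `w` is a finite factor of the two-sided infinite word `ω`. -/
def IsFactor (w : List A) (ω : ℤ → A) : Prop :=
  ∃ k : ℤ, w = (List.range w.length).map fun i => ω (k + i)

/-- The subshift `Ω(S)` associated to `S`. -/
def OmegaS (S : A → List A) : Set (ℤ → A) := {ω | ∀ w, IsFactor w ω → w ∈ WS S}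

/-- The set `W(Ω(S))` of finite factors of elements of `Ω(S)`. -/
def WOmega (S : A → List A) : Set (List A) := {w | ∃ ω ∈ OmegaS S, IsFactor w ω}

/-- Condition (ℓ): `|S^n(e)| → ∞`. -/
def CondL (S : A → List A) (e : A) : Prop :=
  Tendsto (fun n => (iter S n [e]).length) atTop atTop

/-- Condition (o): every letter occurs in some `S^n(e)`. -/
def CondO (S : A → List A) (e : A) : Prop := ∀ a : A, ∃ n : ℕ, a ∈ iter S n [e]

/-- Condition (c): `W(S) = W(Ω(S))`. -/
def CondC (S : A → List A) : Prop := WS S = WOmega S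

/-- `(Ω(S),T)` is a substitution dynamical system. -/
def IsSubstSystem (S : A → List A) : Prop := (∃ e, CondL S e ∧ CondO S e) ∧ CondC S

/-- `v` occurs with bounded gaps in the set of words `W`. -/
def BddGaps (v : List A) (W : Set (List A)) : Prop :=
  ∃ L : ℕ, 0 < L ∧ ∀ w ∈ W, L ≤ w.length → v <:+: w

/-- Condition (BG) for the letter `e`. -/
def BG (S : A → List A) (e : A) : Prop := CondL S e ∧ CondO S e ∧ BddGaps [e] (WS S)

/-- The shift by `k`; `shift 1` is the map `T`. -/
def shift (k : ℤ) (ω : ℤ → A) : ℤ → A := fun n => ω (n + k)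

/-- `(Ω(S),T)` is minimal: every orbit is dense in `Ω(S)`. -/
def Minimal [TopologicalSpace A] (S : A → List A) : Prop :=
  ∀ ω ∈ OmegaS S, OmegaS S ⊆ closure {ω' | ∃ k : ℤ, ω' = shift k ω}

/-- `(Ω(S),T)` is linearly repetitive. -/
def LinRep (S : A → List A) : Prop :=
  ∃ C : ℝ, 0 < C ∧ ∀ v ∈ WS S, ∀ w ∈ WS S, C * v.length ≤ (w.length : ℝ) → v <:+: w

/-- `(Ω(S),T)` is aperiodic. -/
def Aperiodic (S : A → List A) : Prop :=
  ∀ ω ∈ OmegaS S, ∀ k : ℤ, k ≠ 0 → shift k ω ≠ ω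

/-- The set `B` of letters `a` with `limsup |S^n(a)| < ∞`. -/
def Bset (S : A → List A) : Set A := {a | ∃ M : ℕ, ∀ n, (iter S n [a]).length ≤ M}

/-- The set `C = A ∖ B`. -/
def Cset (S : A → List A) : Set A := (Bset S)ᶜ

open Classical in
/-- `tilde S w` is the word obtained from `w` by deleting all letters of `B`. -/
noncomputable def tilde (S : A → List A) (w : List A) : List A :=
  w.filter fun x => decide (x ∈ Cset S)

/-- The induced substitution `S̃`. -/
noncomputable def tildeS (S : A → List A) : A → List A := fun x => tilde S (S x)


/-- A 1-partition of a finite word `w`: `w = z₀ z₁ ⋯ z_n z_{n+1}` with `z₁,…,z_n ∈ {S(a), b}`,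
`z₀` a suffix of an element of `{S(a), b}` and `z_{n+1}` a prefix of such an element. -/
def IsOnePart (S : A → List A) (a b : A) (w z0 : List A) (zs : List (List A))
    (zl : List A) : Prop :=
  w = z0 ++ zs.flatten ++ zl ∧
  (∃ x ∈ ({S a, [b]} : Set (List A)), z0 <:+ x) ∧
  (∀ z ∈ zs, z ∈ ({S a, [b]} : Set (List A))) ∧
  (∃ x ∈ ({S a, [b]} : Set (List A)), zl <+: x)

/-- The set of cut positions of a 1-partition of a finite word. -/
def cuts (z0 : List A) (zs : List (List A)) : Set ℕ :=
  {p | ∃ i ≤ zs.length, p = z0.length + ((zs.take i).flatten).length}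

/-- `S` is primitive. -/
def Primitive (S : A → List A) : Prop := ∃ r : ℕ, 0 < r ∧ ∀ x y : A, y ∈ iter S r [x]

/-!
Since `S b = b` and the lengths `|Sⁿ(e)|` are unbounded, `S(a)` contains a letter other than `b`.
Every concatenation of blocks `S(a)` and `b` (followed by a partial block) has the form `bᵐ t`
with `t` and `S(a)` comparable for the prefix order, so `S(a)` cannot be a prefix of `b bᵐ t`:
otherwise `S(a)` would be a prefix of `bᵐ⁺¹ S(a)`, hence a power of `b`. Thus two block
decompositions of the same word that still have `|S(a)| + 1` letters left must begin with the same
block, and by induction they cut the word at the same places. Reversing words gives the statements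
about suffixes.
-/

theorem forall_eq_of_prefix_replicate_append {s : List A} {b : A} {n : ℕ} (hn : n ≠ 0)
    (h : s <+: replicate n b ++ s) : ∀ x ∈ s, x = b := by
  have hiter : ∀ m, s <+: replicate (m * n) b ++ s := by
    intro m
    induction m with
    | zero => simp
    | succ m ih =>
      calc s <+: replicate n b ++ s := h
        _ <+: replicate n b ++ (replicate (m * n) b ++ s) := (prefix_append_right_inj _).2 ih
        _ = replicate ((m + 1) * n) b ++ s := by
          rw [← append_assoc, ← replicate_add, Nat.succ_mul, Nat.add_comm]
  have hrep : s <+: replicate (s.length * n) b :=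
    prefix_of_prefix_length_le (hiter s.length) (prefix_append _ _)
      (by simpa using Nat.le_mul_of_pos_right _ (Nat.pos_of_ne_zero hn))
  exact fun x hx => eq_of_mem_replicate (hrep.subset hx)

section Blocks

variable {s : List A} {b : A}

theorem exists_replicate_append_of_blocks {zs : List (List A)} {zl : List A}
    (hzs : ∀ z ∈ zs, z ∈ ({s, [b]} : Set (List A)))
    (hzl : ∃ x ∈ ({s, [b]} : Set (List A)), zl <+: x) :
    ∃ m t, zs.flatten ++ zl = replicate m b ++ t ∧ (t <+: s ∨ s <+: t) := by
  induction zs with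
  | nil =>
    obtain ⟨x, rfl | rfl, hx⟩ := hzl
    · exact ⟨0, zl, rfl, .inl hx⟩
    · refine ⟨zl.length, [], ?_, .inl nil_prefix⟩
      simpa [eq_replicate_iff] using fun y hy => mem_singleton.1 (hx.subset hy)
  | cons z zs ih =>
    obtain rfl | rfl := hzs z mem_cons_self
    · exact ⟨0, z ++ (zs.flatten ++ zl), by simp, .inr (prefix_append _ _)⟩
    · obtain ⟨m, t, ht, hcomp⟩ := ih fun z hz => hzs z (mem_cons_of_mem _ hz)
      exact ⟨m + 1, t, by simp [ht, replicate_succ], hcomp⟩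

theorem not_prefix_cons_of_blocks (hs : ∃ x ∈ s, x ≠ b) {zs : List (List A)} {zl : List A}
    (hzs : ∀ z ∈ zs, z ∈ ({s, [b]} : Set (List A)))
    (hzl : ∃ x ∈ ({s, [b]} : Set (List A)), zl <+: x) :
    ¬ s <+: b :: (zs.flatten ++ zl) := by
  intro h
  obtain ⟨m, t, ht, hcomp⟩ := exists_replicate_append_of_blocks hzs hzl
  rw [ht, ← cons_append, ← replicate_succ] at h
  have hper : s <+: replicate (m + 1) b ++ s := by
    rcases hcomp with hts | hst
    · exact h.trans ((prefix_append_right_inj _).2 hts)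
    · exact prefix_of_prefix_length_le h ((prefix_append_right_inj _).2 hst) (by simp)
  obtain ⟨x, hx, hxb⟩ := hs
  exact hxb (forall_eq_of_prefix_replicate_append (Nat.succ_ne_zero m) hper x hx)

theorem length_le_of_prefix_block (hs : s ≠ []) {zl : List A}
    (hzl : ∃ x ∈ ({s, [b]} : Set (List A)), zl <+: x) : zl.length ≤ s.length := by
  obtain ⟨x, rfl | rfl, hx⟩ := hzl
  · exact hx.length_le
  · exact hx.length_le.trans (length_pos_of_ne_nil hs)

theorem exists_cons_of_flatten_append_eq (hs : ∃ x ∈ s, x ≠ b) {z : List A}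
    {zs zs' : List (List A)} {zl zl' : List A}
    (hzs : ∀ w ∈ z :: zs, w ∈ ({s, [b]} : Set (List A)))
    (hzs' : ∀ w ∈ zs', w ∈ ({s, [b]} : Set (List A)))
    (hzl : ∃ x ∈ ({s, [b]} : Set (List A)), zl <+: x)
    (hzl' : ∃ x ∈ ({s, [b]} : Set (List A)), zl' <+: x)
    (heq : (z :: zs).flatten ++ zl = zs'.flatten ++ zl')
    (hlen : s.length < ((z :: zs).flatten ++ zl).length) :
    ∃ zs'', zs' = z :: zs'' := by
  have hs_ne : s ≠ [] := by rintro rfl; simp at hs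
  obtain _ | ⟨z', zs'⟩ := zs'
  · rw [heq, flatten_nil, nil_append] at hlen
    exact absurd (length_le_of_prefix_block hs_ne hzl') (not_le.2 hlen)
  have hz := hzs z mem_cons_self
  have hz' := hzs' z' mem_cons_self
  simp only [flatten_cons, append_assoc] at heq
  rcases hz with rfl | rfl <;> rcases hz' with rfl | rfl
  · exact ⟨zs', rfl⟩
  · have hpre : z <+: [b] ++ (zs'.flatten ++ zl') := heq ▸ prefix_append _ _
    exact absurd hpre (not_prefix_cons_of_blocks hs (fun w hw => hzs' w (mem_cons_of_mem _ hw)) hzl')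
  · have hpre : z' <+: [b] ++ (zs.flatten ++ zl) := heq.symm ▸ prefix_append _ _
    exact absurd hpre (not_prefix_cons_of_blocks hs (fun w hw => hzs w (mem_cons_of_mem _ hw)) hzl)
  · exact ⟨zs', rfl⟩

theorem prefix_of_flatten_append_eq (hs : ∃ x ∈ s, x ≠ b) {xs zs zs' : List (List A)}
    {zl zl' : List A}
    (hzs : ∀ z ∈ zs, z ∈ ({s, [b]} : Set (List A)))
    (hzs' : ∀ z ∈ zs', z ∈ ({s, [b]} : Set (List A)))
    (hzl : ∃ x ∈ ({s, [b]} : Set (List A)), zl <+: x)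
    (hzl' : ∃ x ∈ ({s, [b]} : Set (List A)), zl' <+: x)
    (heq : zs.flatten ++ zl = zs'.flatten ++ zl') (hxs : xs <+: zs)
    (hlen : xs.flatten.length + s.length < (zs.flatten ++ zl).length) :
    xs <+: zs' := by
  induction xs generalizing zs zs' with
  | nil => exact nil_prefix
  | cons x xs ih =>
    obtain _ | ⟨z, zs⟩ := zs
    · exact absurd hxs (by simp)
    obtain ⟨rfl, htail⟩ := cons_prefix_cons.1 hxs
    simp only [flatten_cons, length_append] at hlen
    obtain ⟨zs', rfl⟩ := exists_cons_of_flatten_append_eq hs hzs hzs' hzl hzl' heq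
      (by simp only [flatten_cons, length_append]; omega)
    simp only [flatten_cons, append_assoc, append_right_inj] at heq
    refine cons_prefix_cons.2 ⟨rfl, ih (fun z hz => hzs z (mem_cons_of_mem _ hz))
      (fun z hz => hzs' z (mem_cons_of_mem _ hz)) heq htail ?_⟩
    simp only [length_append]
    omega

theorem prefix_iff_of_flatten_append_eq (hs : ∃ x ∈ s, x ≠ b) {xs zs zs' : List (List A)}
    {zl zl' : List A}
    (hzs : ∀ z ∈ zs, z ∈ ({s, [b]} : Set (List A)))
    (hzs' : ∀ z ∈ zs', z ∈ ({s, [b]} : Set (List A)))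
    (hzl : ∃ x ∈ ({s, [b]} : Set (List A)), zl <+: x)
    (hzl' : ∃ x ∈ ({s, [b]} : Set (List A)), zl' <+: x)
    (heq : zs.flatten ++ zl = zs'.flatten ++ zl')
    (hlen : xs.flatten.length + s.length < (zs.flatten ++ zl).length) :
    xs <+: zs ↔ xs <+: zs' :=
  ⟨fun h => prefix_of_flatten_append_eq hs hzs hzs' hzl hzl' heq h hlen,
    fun h => prefix_of_flatten_append_eq hs hzs' hzs hzl' hzl heq.symm h (heq ▸ hlen)⟩

theorem reverse_mem_blocks {z : List A} (hz : z ∈ ({s, [b]} : Set (List A))) :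
    z.reverse ∈ ({s.reverse, [b]} : Set (List A)) := by
  rcases hz with rfl | rfl <;> simp

theorem suffix_of_append_flatten_eq (hs : ∃ x ∈ s, x ≠ b) {ys zs zs' : List (List A)}
    {z0 z0' : List A}
    (hzs : ∀ z ∈ zs, z ∈ ({s, [b]} : Set (List A)))
    (hzs' : ∀ z ∈ zs', z ∈ ({s, [b]} : Set (List A)))
    (hz0 : ∃ x ∈ ({s, [b]} : Set (List A)), z0 <:+ x)
    (hz0' : ∃ x ∈ ({s, [b]} : Set (List A)), z0' <:+ x)
    (heq : z0 ++ zs.flatten = z0' ++ zs'.flatten) (hys : ys <:+ zs)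
    (hlen : ys.flatten.length + s.length < (z0 ++ zs.flatten).length) :
    ys <:+ zs' := by
  have hblocks : ∀ {l : List (List A)}, (∀ z ∈ l, z ∈ ({s, [b]} : Set (List A))) →
      ∀ z ∈ (l.map reverse).reverse, z ∈ ({s.reverse, [b]} : Set (List A)) := by
    intro l hl z hz
    obtain ⟨w, hw, rfl⟩ := mem_map.1 (mem_reverse.1 hz)
    exact reverse_mem_blocks (hl w hw)
  have hpartial : ∀ {zl : List A}, (∃ x ∈ ({s, [b]} : Set (List A)), zl <:+ x) →
      ∃ x ∈ ({s.reverse, [b]} : Set (List A)), zl.reverse <+: x := by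
    rintro zl ⟨x, hx, hzl⟩
    exact ⟨x.reverse, reverse_mem_blocks hx, reverse_prefix.2 hzl⟩
  have hpre := prefix_of_flatten_append_eq (s := s.reverse) (xs := (ys.map reverse).reverse)
    (by simpa using hs) (hblocks hzs) (hblocks hzs') (hpartial hz0) (hpartial hz0')
    (by rw [← reverse_flatten, ← reverse_flatten, ← reverse_append, ← reverse_append, heq])
    (reverse_prefix.2 (hys.map _))
    (by simpa only [← reverse_flatten, ← reverse_append, length_reverse] using hlen)
  simpa using (reverse_prefix.1 hpre).map reverse

theorem suffix_iff_of_append_flatten_eq (hs : ∃ x ∈ s, x ≠ b) {ys zs zs' : List (List A)}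
    {z0 z0' : List A}
    (hzs : ∀ z ∈ zs, z ∈ ({s, [b]} : Set (List A)))
    (hzs' : ∀ z ∈ zs', z ∈ ({s, [b]} : Set (List A)))
    (hz0 : ∃ x ∈ ({s, [b]} : Set (List A)), z0 <:+ x)
    (hz0' : ∃ x ∈ ({s, [b]} : Set (List A)), z0' <:+ x)
    (heq : z0 ++ zs.flatten = z0' ++ zs'.flatten)
    (hlen : ys.flatten.length + s.length < (z0 ++ zs.flatten).length) :
    ys <:+ zs ↔ ys <:+ zs' :=
  ⟨fun h => suffix_of_append_flatten_eq hs hzs hzs' hz0 hz0' heq h hlen,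
    fun h => suffix_of_append_flatten_eq hs hzs' hzs hz0' hz0 heq.symm h (heq ▸ hlen)⟩

end Blocks

theorem mem_cuts_iff {z0 : List A} {zs : List (List A)} {p : ℕ} :
    p ∈ cuts z0 zs ↔ ∃ xs, xs <+: zs ∧ p = z0.length + xs.flatten.length := by
  constructor
  · rintro ⟨i, -, rfl⟩
    exact ⟨zs.take i, take_prefix _ _, rfl⟩
  · rintro ⟨xs, hxs, rfl⟩
    exact ⟨xs.length, hxs.length_le, by rw [← prefix_iff_eq_take.1 hxs]⟩

theorem mem_cuts_iff_suffix {v z0 : List A} {zs : List (List A)} {p : ℕ}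
    (hv : v = z0 ++ zs.flatten) :
    p ∈ cuts z0 zs ↔ ∃ ys, ys <:+ zs ∧ p + ys.flatten.length = v.length := by
  rw [mem_cuts_iff, hv]
  constructor
  · rintro ⟨xs, ⟨ys, rfl⟩, rfl⟩
    exact ⟨ys, suffix_append _ _, by simp only [flatten_append, length_append]; omega⟩
  · rintro ⟨ys, ⟨xs, rfl⟩, hp⟩
    simp only [flatten_append, length_append] at hp
    exact ⟨xs, prefix_append _ _, by omega⟩

theorem subst_eq_self {S : A → List A} {w : List A} (hw : ∀ x ∈ w, S x = [x]) :
    subst S w = w :=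
  (flatMap_congr hw).trans (flatMap_singleton' w)

theorem iter_succ_singleton {S : A → List A} {x : A} (h : ∀ y ∈ S x, S y = [y]) (n : ℕ) :
    iter S (n + 1) [x] = S x := by
  rw [iter, Function.iterate_succ_apply, subst, flatMap_singleton]
  exact Function.iterate_fixed (subst_eq_self h) n

theorem exists_mem_ne_of_condL {a b e : A} {S : A → List A} (hcover : ∀ x : A, x = a ∨ x = b)
    (hSb : S b = [b]) (hL : CondL S e) : ∃ x ∈ S a, x ≠ b := by
  by_contra! hSa
  have hfixed : ∀ x, ∀ y ∈ S x, S y = [y] := by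
    intro x y hy
    obtain rfl : y = b := by
      rcases hcover x with rfl | rfl
      · exact hSa y hy
      · simpa [hSb] using hy
    exact hSb
  refine not_tendsto_const_atTop (S e).length (atTop : Filter ℕ) ?_
  simpa only [iter_succ_singleton (hfixed e)] using (tendsto_add_atTop_iff_nat 1).2 hL

theorem statement15_general {A : Type*}
    (a b : A) (hcover : ∀ x : A, x = a ∨ x = b)
    (S : A → List A) (hS : IsSubstSystem S) (hSb : S b = [b]) :
    (¬ (S a <+: b :: S a)) ∧ (¬ (S a <:+ S a ++ [b])) ∧
    (∀ v ∈ WS S, ∀ (z0 : List A) (zs : List (List A)) (zl : List A)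
        (z0' : List A) (zs' : List (List A)) (zl' : List A),
      IsOnePart S a b v z0 zs zl → IsOnePart S a b v z0' zs' zl' →
      z0 = [] → zs.head? = some (S a) → z0' = [] → zs'.head? = some (S a) →
      ∀ p : ℕ, p + (S a ++ [b]).length ≤ v.length →
        (p ∈ cuts z0 zs ↔ p ∈ cuts z0' zs')) ∧
    (∀ v ∈ WS S, ∀ (z0 : List A) (zs : List (List A)) (zl : List A)
        (z0' : List A) (zs' : List (List A)) (zl' : List A),
      IsOnePart S a b v z0 zs zl → IsOnePart S a b v z0' zs' zl' →
      zl = [] → zs.getLast? = some (S a) → zl' = [] → zs'.getLast? = some (S a) →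
      ∀ p : ℕ, (S a ++ [b]).length ≤ p →
        (p ∈ cuts z0 zs ↔ p ∈ cuts z0' zs')) := by
  obtain ⟨⟨e, hL, -⟩, -⟩ := hS
  have hs : ∃ x ∈ S a, x ≠ b := exists_mem_ne_of_condL hcover hSb hL
  refine ⟨not_prefix_cons_of_blocks hs (zs := []) (by simp) ⟨S a, by simp, prefix_rfl⟩,
    fun h => ?_, ?_, ?_⟩
  · refine not_prefix_cons_of_blocks (s := (S a).reverse) (by simpa using hs) (zs := [])
      (by simp) ⟨(S a).reverse, by simp, prefix_rfl⟩ ?_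
    simpa using reverse_prefix.2 h
  · rintro v - z0 zs zl z0' zs' zl' ⟨rfl, -, hzs, hzl⟩ ⟨hv, -, hzs', hzl'⟩ rfl - rfl - p hp
    simp only [nil_append] at hv hp
    simp only [mem_cuts_iff, length_nil, zero_add]
    refine exists_congr fun xs => and_congr_left fun hpx =>
      prefix_iff_of_flatten_append_eq hs hzs hzs' hzl hzl' hv ?_
    simp only [length_append, length_singleton] at hp ⊢
    omega
  · rintro v - z0 zs zl z0' zs' zl' ⟨hv, hz0, hzs, -⟩ ⟨hv', hz0', hzs', -⟩ rfl - rfl - p hp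
    simp only [append_nil] at hv hv'
    rw [mem_cuts_iff_suffix hv, mem_cuts_iff_suffix hv']
    refine exists_congr fun ys => and_congr_left fun hpy =>
      suffix_iff_of_append_flatten_eq hs hzs hzs' hz0 hz0' (hv.symm.trans hv') ?_
    rw [← hv]
    simp only [length_append, length_singleton] at hp
    omega

/-- `S(a)` is neither a prefix of `bS(a)` nor a suffix of `S(a)b`;
consequently two 1-partitions of `v ∈ W(S)` both beginning (resp. ending) with the block
`S(a)` agree except on a suffix (resp. prefix) of length at most `|S(a)b|`. -/
theorem statement15 {A : Type*} [Fintype A] [TopologicalSpace A] [DiscreteTopology A]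
    (a b : A) (hab : a ≠ b) (hcover : ∀ x : A, x = a ∨ x = b)
    (S : A → List A) (hS : IsSubstSystem S) (hmin : Minimal S) (hap : Aperiodic S)
    (hnp : ¬ Primitive S) (hSa : 1 < (S a).length) (hSb : S b = [b]) :
    (¬ (S a <+: b :: S a)) ∧ (¬ (S a <:+ S a ++ [b])) ∧
    (∀ v ∈ WS S, ∀ (z0 : List A) (zs : List (List A)) (zl : List A)
        (z0' : List A) (zs' : List (List A)) (zl' : List A),
      IsOnePart S a b v z0 zs zl → IsOnePart S a b v z0' zs' zl' →
      z0 = [] → zs.head? = some (S a) → z0' = [] → zs'.head? = some (S a) →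
      ∀ p : ℕ, p + (S a ++ [b]).length ≤ v.length →
        (p ∈ cuts z0 zs ↔ p ∈ cuts z0' zs')) ∧
    (∀ v ∈ WS S, ∀ (z0 : List A) (zs : List (List A)) (zl : List A)
        (z0' : List A) (zs' : List (List A)) (zl' : List A),
      IsOnePart S a b v z0 zs zl → IsOnePart S a b v z0' zs' zl' →
      zl = [] → zs.getLast? = some (S a) → zl' = [] → zs'.getLast? = some (S a) →
      ∀ p : ℕ, (S a ++ [b]).length ≤ p →
        (p ∈ cuts z0 zs ↔ p ∈ cuts z0' zs')) :=
  statement15_general a b hcover S hS hSb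

end SubstLR
end

section
/- Let (Ω(S),T) be a minimal, aperiodic, nonprimitive substitution dynamical system over {a,b} with |S(a)|>1 and S(b)=b, and suppose aa does not occur in S(a). Then there exists L∈ℕ such that for every v∈W(S), all 1-partitions of v induce the same 1-partition on the middle part v(L)⋯v(|v|−L). -/
open List Filter Topology MeasureTheory

namespace SubstLR

variable {A : Type*}

/-!
Let `u = S(a)` and `M = |u|_a`. Since `(Ω(S), T)` is aperiodic, `b^m ∉ W(S)` for large `m`, which
forces `u` to begin and end with `a`. At every cut of a 1-partition of `v` the number of `a`'s read
so far is congruent mod `M` to the number of `a`'s in `z₀`; inside a `u`-block it is not, because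
`u` begins and ends with `a`. So two 1-partitions with the same residue have the same cuts away
from the ends of `v`. If the residues differ, the offset of the last `a` of a block of the first
partition inside a block of the second is fixed by the residues, so the next block of the first
partition always starts at the same distance: the middle of `v` is a power of a fixed word
`u b^k`. Long disagreements would thus put all powers of one of finitely many words `u b^k` into
`W(S)`, and hence a periodic point into `Ω(S)`.
-/

section Words

variable {A : Type*}

theorem getElem?_add_of_prefix_drop {u v : List A} {c o : ℕ} (h : u <+: v.drop c)
    (ho : o < u.length) : v[c + o]? = u[o]? := by
  obtain ⟨t, ht⟩ := h
  rw [← List.getElem?_drop, ← ht, List.getElem?_append_left ho]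

theorem take_add_of_prefix_drop {u v : List A} {c o : ℕ} (h : u <+: v.drop c)
    (ho : o ≤ u.length) : v.take (c + o) = v.take c ++ u.take o := by
  obtain ⟨t, ht⟩ := h
  rw [List.take_add, ← ht, List.take_append_of_le_length ho]

theorem drop_eq_append_of_prefix_drop {u v : List A} {c : ℕ} (h : u <+: v.drop c) :
    v.drop c = u ++ v.drop (c + u.length) := by
  rw [← List.drop_drop]
  exact (List.prefix_iff_eq_append.1 h).symm

theorem prefix_drop_add_of_prefix_drop {u v : List A} {c : ℕ} (h : u <+: v.drop c) (j : ℕ) :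
    u.drop j <+: v.drop (c + j) := by
  simpa [List.drop_drop] using h.drop j

theorem flatten_replicate_prefix_flatten_replicate (r : List A) {m m' : ℕ} (h : m ≤ m') :
    (List.replicate m r).flatten <+: (List.replicate m' r).flatten := by
  rw [← Nat.add_sub_cancel' h, List.replicate_add, List.flatten_append]
  exact List.prefix_append _ _

theorem getElem?_flatten_replicate (r : List A) {m i : ℕ} (hi : i < m * r.length) :
    (List.replicate m r).flatten[i]? = r[i % r.length]? := by
  induction m generalizing i with
  | zero => simp at hi
  | succ m ih =>
    rw [List.replicate_succ, List.flatten_cons]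
    rcases lt_or_ge i r.length with h | h
    · rw [List.getElem?_append_left h, Nat.mod_eq_of_lt h]
    · rw [List.getElem?_append_right h, ih (by rw [Nat.succ_mul] at hi; omega),
        ← Nat.mod_eq_sub_mod h]

theorem exists_replicate_append_prefix {l : List A} {a b : A} (hl : ∀ x ∈ l, x = a ∨ x = b)
    (ha : a ∈ l) : ∃ k, List.replicate k b ++ [a] <+: l := by
  induction l with
  | nil => simp at ha
  | cons x l ih =>
    by_cases hx : x = a
    · exact ⟨0, by simp [hx]⟩
    · obtain ⟨k, hk⟩ := ih (fun y hy => hl y (List.mem_cons_of_mem _ hy))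
        ((List.mem_cons.1 ha).resolve_left (Ne.symm hx))
      refine ⟨k + 1, ?_⟩
      rw [List.replicate_succ, List.cons_append, ((hl x (by simp)).resolve_left hx)]
      exact List.cons_prefix_cons.2 ⟨rfl, hk⟩

theorem exists_replicate_append_prefix_drop {l : List A} {a b : A}
    (hl : ∀ x : A, x = a ∨ x = b) (hlast : l.getLast? = some a) {j : ℕ} (hj : j < l.length) :
    ∃ k, List.replicate k b ++ [a] <+: l.drop j :=
  exists_replicate_append_prefix (fun x _ => hl x)
    (List.mem_of_getLast? (by rw [List.getLast?_drop, if_neg (by omega), hlast]))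

theorem add_lt_length_of_replicate_append_prefix_drop {l : List A} {a b : A} {k j : ℕ}
    (h : List.replicate k b ++ [a] <+: l.drop j) : k + j < l.length := by
  have := h.length_le
  simp only [List.length_append, List.length_replicate, List.length_singleton,
    List.length_drop] at this
  omega

variable [DecidableEq A]

theorem count_take_lt_count {u : List A} {a : A} {j o : ℕ} (h : u[j]? = some a) (hoj : o ≤ j) :
    (u.take o).count a < u.count a := by
  have hmem : a ∈ u.drop o :=
    List.mem_of_getElem? (i := j - o) (by rwa [List.getElem?_drop, Nat.add_sub_cancel' hoj])
  have hsplit := List.count_append (a := a) (l₁ := u.take o) (l₂ := u.drop o)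
  rw [List.take_append_drop] at hsplit
  have := List.count_pos_iff.2 hmem
  omega

theorem count_take_add_one {u : List A} {a : A} {o : ℕ} (h : u[o]? = some a) :
    (u.take (o + 1)).count a = (u.take o).count a + 1 := by
  simp [List.take_add_one, h, List.count_append]

theorem eq_of_count_take_eq {u : List A} {a : A} {o o' : ℕ} (ho : u[o]? = some a)
    (ho' : u[o']? = some a) (h : (u.take o).count a = (u.take o').count a) : o = o' := by
  have hlt : ∀ {i j}, u[i]? = some a → i < j → (u.take i).count a < (u.take j).count a :=
    fun {i j} hi hij => by
      have := (List.take_sublist_take_left (l := u) (Nat.succ_le_of_lt hij)).count_le a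
      rw [count_take_add_one hi] at this
      omega
  rcases lt_trichotomy o o' with h' | h' | h'
  · exact absurd h (hlt ho h').ne
  · exact h'
  · exact absurd h (hlt ho' h').ne'

theorem count_take_pos {u : List A} {a : A} {o : ℕ} (h : u.head? = some a) (ho : 0 < o) :
    0 < (u.take o).count a :=
  List.count_pos_iff.2 <| List.mem_of_getElem? (i := 0) <| by
    rw [List.getElem?_take, if_pos ho, ← List.head?_eq_getElem?, h]

theorem count_take_length_sub_one_add_one {u : List A} {a : A} (h : u.getLast? = some a) :
    (u.take (u.length - 1)).count a + 1 = u.count a := by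
  have hpos : 0 < u.length := List.length_pos_iff.2 (by rintro rfl; simp at h)
  rw [← count_take_add_one (List.getLast?_eq_getElem? ▸ h), Nat.sub_add_cancel hpos,
    List.take_length]

end Words

section Substitution

variable {A : Type*} {S : A → List A} {a b : A}

theorem mem_WS_of_infix {w w' : List A} (h : w' <:+: w) (hw : w ∈ WS S) : w' ∈ WS S :=
  let ⟨x, n, hx⟩ := hw
  ⟨x, n, h.trans hx⟩

theorem iter_succ (S : A → List A) (m : ℕ) (w : List A) :
    iter S (m + 1) w = subst S (iter S m w) :=
  Function.iterate_succ_apply' _ _ _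

theorem iter_reverse (S : A → List A) (m : ℕ) (w : List A) :
    iter (fun x => (S x).reverse) m w.reverse = (iter S m w).reverse := by
  induction m with
  | zero => rfl
  | succ m ih => rw [iter_succ, iter_succ, ih, subst, subst, List.reverse_flatMap]; rfl

-- The coercion in `IsFactor` is elaborated through the list monad, as this `flatMap`.
theorem flatMap_singleton_natCast (l : List ℕ) :
    l.flatMap (fun a : ℕ => ([(a : ℤ)] : List ℤ)) = l.map (Nat.cast : ℕ → ℤ) :=
  List.flatMap_pure_eq_map _ _

theorem getElem?_of_eq_map_range {w : List A} {ω : ℤ → A} {k : ℤ}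
    (hk : w = (List.range w.length).map fun i => ω (k + i)) (i : ℕ) :
    w[i]? = if i < w.length then some (ω (k + i)) else none := by
  conv_lhs => rw [hk]
  split_ifs with hi <;> simp [hi, flatMap_singleton_natCast]

theorem toNat_add_emod {q : ℕ} (hq : 0 < q) (k : ℤ) (i : ℕ) :
    ((k + i) % q).toNat = ((k % q).toNat + i) % q := by
  have h0 : 0 ≤ k % q := Int.emod_nonneg _ (by omega)
  have : (k + i) % (q : ℤ) = (((k % q).toNat + i : ℕ) : ℤ) % q := by
    rw [Nat.cast_add, Int.toNat_of_nonneg h0, Int.emod_add_emod]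
  rw [this, ← Int.natCast_mod, Int.toNat_natCast]

theorem not_aperiodic_of_forall_flatten_replicate_mem {r : List A} (hr : r ≠ [])
    (h : ∀ m, (List.replicate m r).flatten ∈ WS S) : ¬ Aperiodic S := by
  obtain ⟨d, -⟩ := List.exists_mem_of_ne_nil r hr
  have hq : 0 < r.length := List.length_pos_iff.2 hr
  have hω : (fun z : ℤ => r.getD (z % r.length).toNat d) ∈ OmegaS S := by
    rintro w ⟨k, hk⟩
    refine mem_WS_of_infix ?_ (h (w.length + 1))
    have hj : (k % r.length).toNat < r.length := by
      have := Int.emod_lt_of_pos k (by omega : (0 : ℤ) < r.length); omega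
    have hw : w = (((List.replicate (w.length + 1) r).flatten).drop
        (k % r.length).toNat).take w.length := by
      refine List.ext_getElem? fun i => ?_
      rw [getElem?_of_eq_map_range (ω := fun z => r.getD (z % r.length).toNat d) hk,
        List.getElem?_take, List.getElem?_drop]
      split_ifs with hi
      · rw [getElem?_flatten_replicate r (by nlinarith), toNat_add_emod hq,
          List.getElem?_eq_getElem (Nat.mod_lt _ hq),
          List.getD_eq_getElem _ _ (Nat.mod_lt _ hq)]
      · rfl
    nth_rewrite 1 [hw]
    exact (List.take_prefix _ _).isInfix.trans (List.drop_suffix _ _).isInfix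
  intro hap
  refine hap _ hω r.length (by omega) (funext fun z => ?_)
  simp [shift, Int.add_emod_right]

theorem not_aperiodic_of_forall_replicate_mem (h : ∀ m, List.replicate m b ∈ WS S) :
    ¬ Aperiodic S :=
  not_aperiodic_of_forall_flatten_replicate_mem (r := [b]) (by simp)
    (by simpa [List.flatten_replicate_singleton] using h)

theorem subst_eq_self_of_forall_eq (hSb : S b = [b]) {w : List A} (hw : ∀ x ∈ w, x = b) :
    subst S w = w := by
  induction w with
  | nil => rfl
  | cons x w ih =>
    rw [subst, List.flatMap_cons, ← subst, ih (fun y hy => hw y (List.mem_cons_of_mem _ hy)),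
      hw x (by simp), hSb, List.singleton_append]

theorem mem_self_of_isSubstSystem (hS : IsSubstSystem S) (hcover : ∀ x : A, x = a ∨ x = b)
    (hSb : S b = [b]) : a ∈ S a := by
  by_contra ha
  have hSa : ∀ x ∈ S a, x = b := fun x hx =>
    (hcover x).resolve_left (by rintro rfl; exact ha hx)
  have hiter_a : ∀ m, iter S (m + 1) [a] = S a := fun m => by
    induction m with
    | zero => simp [iter, subst]
    | succ m ih => rw [iter_succ, ih, subst_eq_self_of_forall_eq hSb hSa]
  have hiter_b : ∀ m, iter S m [b] = [b] := fun m =>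
    Function.iterate_fixed (f := subst S) (by simp [subst, hSb]) m
  have hbound : ∀ x m, (iter S m [x]).length ≤ (S a).length + 1 := by
    intro x m
    rcases hcover x with rfl | rfl
    · cases m with
      | zero => simp [iter]
      | succ m => rw [hiter_a]; omega
    · simp [hiter_b]
  obtain ⟨⟨e, hL, -⟩, -⟩ := hS
  obtain ⟨m, hm⟩ := (hL.eventually_gt_atTop ((S a).length + 1)).exists
  exact absurd (hbound e m) (not_le.2 hm)

theorem replicate_infix_iter (hab : a ≠ b) (hcover : ∀ x : A, x = a ∨ x = b) (hSb : S b = [b])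
    (ha : a ∈ S a) (hhead : (S a).head? = some b) (m : ℕ) :
    List.replicate m b <:+: iter S m [a] := by
  suffices ∃ y, a ∈ y ∧ iter S m [a] = List.replicate m b ++ y by
    obtain ⟨y, -, hy⟩ := this
    exact hy ▸ (List.prefix_append _ _).isInfix
  induction m with
  | zero => exact ⟨[a], by simp, rfl⟩
  | succ m ih =>
    obtain ⟨y, hay, hy⟩ := ih
    obtain ⟨x, y', rfl⟩ := List.exists_cons_of_ne_nil (List.ne_nil_of_mem hay)
    obtain ⟨t, ht⟩ : ∃ t, S x = b :: t := by
      rcases hcover x with rfl | rfl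
      · exact List.head?_eq_some_iff.1 hhead
      · exact ⟨[], hSb⟩
    have hsubst : subst S (x :: y') = b :: (t ++ subst S y') := by
      rw [subst, List.flatMap_cons, ← subst, ht, List.cons_append]
    have hmem : a ∈ subst S (x :: y') := List.mem_flatMap.2 ⟨a, hay, ha⟩
    rw [hsubst, List.mem_cons] at hmem
    refine ⟨t ++ subst S y', hmem.resolve_left hab, ?_⟩
    rw [iter_succ, hy, subst, List.flatMap_append, ← subst, ← subst,
      subst_eq_self_of_forall_eq hSb (fun _ => List.eq_of_mem_replicate), hsubst,
      List.replicate_succ', List.append_assoc, List.singleton_append]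

theorem head?_eq_and_getLast?_eq (hS : IsSubstSystem S) (hap : Aperiodic S) (hab : a ≠ b)
    (hcover : ∀ x : A, x = a ∨ x = b) (hSb : S b = [b]) :
    (S a).head? = some a ∧ (S a).getLast? = some a := by
  have ha := mem_self_of_isSubstSystem hS hcover hSb
  have hletter : ∀ o : Option A, o ≠ none → o ≠ some b → o = some a := by
    rintro (_ | x) h hb
    · exact absurd rfl h
    · exact congrArg some ((hcover x).resolve_right (fun h' => hb (congrArg some h')))
  constructor
  · refine hletter _ (by simpa using List.ne_nil_of_mem ha) fun hb => ?_
    exact not_aperiodic_of_forall_replicate_mem (fun m => mem_WS_of_infix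
      (replicate_infix_iter hab hcover hSb ha hb m) ⟨a, m, List.infix_refl _⟩) hap
  · refine hletter _ (by simpa using List.ne_nil_of_mem ha) fun hb => ?_
    -- apply the first case to the mirrored substitution `x ↦ S(x)ʳ`
    have hrev := replicate_infix_iter (S := fun x => (S x).reverse) hab hcover (by simp [hSb])
      (List.mem_reverse.2 ha) (by simpa using hb)
    refine not_aperiodic_of_forall_replicate_mem (b := b)
      (fun m => mem_WS_of_infix ?_ ⟨a, m, List.infix_refl _⟩) hap
    have := iter_reverse S m [a]
    rw [List.reverse_singleton] at this
    rw [← List.reverse_infix, List.reverse_replicate, ← this]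
    exact hrev m

end Substitution

section OnePartition

variable {A : Type*}

/-- The position of the `i`-th cut, i.e. of the start of the block `zs[i]`. -/
def cutPos (z0 : List A) (zs : List (List A)) (i : ℕ) : ℕ :=
  z0.length + (zs.take i).flatten.length

def IsBlockStart (S : A → List A) (a : A) (z0 : List A) (zs : List (List A)) (c : ℕ) : Prop :=
  ∃ i, zs[i]? = some (S a) ∧ cutPos z0 zs i = c

variable {S : A → List A} {a b : A} {v z0 zl z0' zl' : List A} {zs zs' : List (List A)}
  {c o p x : ℕ}

theorem exists_le_lt_succ {f : ℕ → ℕ} {N : ℕ} (h0 : f 0 ≤ x) (hN : x < f N) :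
    ∃ i < N, f i ≤ x ∧ x < f (i + 1) := by
  induction N with
  | zero => omega
  | succ N ih =>
    by_cases h : f N ≤ x
    · exact ⟨N, by omega, h, hN⟩
    · obtain ⟨i, hi, h'⟩ := ih (by omega)
      exact ⟨i, by omega, h'⟩

theorem eq_append_take_drop (hv : v = z0 ++ zs.flatten ++ zl) (i : ℕ) :
    v = (z0 ++ (zs.take i).flatten) ++ ((zs.drop i).flatten ++ zl) := by
  rw [hv, ← List.take_append_drop i zs, List.flatten_append]
  simp

theorem take_cutPos (hv : v = z0 ++ zs.flatten ++ zl) (i : ℕ) :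
    v.take (cutPos z0 zs i) = z0 ++ (zs.take i).flatten := by
  rw [eq_append_take_drop hv i]
  exact List.take_left' (by simp [cutPos])

theorem prefix_drop_cutPos (hv : v = z0 ++ zs.flatten ++ zl) {i : ℕ} {z : List A}
    (h : zs[i]? = some z) : z <+: v.drop (cutPos z0 zs i) := by
  obtain ⟨hi, rfl⟩ := List.getElem?_eq_some_iff.1 h
  rw [eq_append_take_drop hv i, List.drop_left' (by simp [cutPos]),
    List.drop_eq_getElem_cons hi, List.flatten_cons, List.append_assoc]
  exact List.prefix_append _ _

theorem cutPos_add_one {i : ℕ} {z : List A} (h : zs[i]? = some z) :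
    cutPos z0 zs (i + 1) = cutPos z0 zs i + z.length := by
  simp [cutPos, List.take_add_one, h]
  omega

theorem IsOnePart.mem_blocks (hP : IsOnePart S a b v z0 zs zl) {z : List A} (hz : z ∈ zs) :
    z = S a ∨ z = [b] := by
  simpa using hP.2.2.1 z hz

theorem IsOnePart.length_z0_le (hP : IsOnePart S a b v z0 zs zl) (hn : 0 < (S a).length) :
    z0.length ≤ (S a).length := by
  obtain ⟨x, rfl | rfl, hx⟩ := hP.2.1
  · exact hx.length_le
  · have := hx.length_le
    simp only [List.length_singleton] at this
    omega

theorem IsOnePart.length_zl_le (hP : IsOnePart S a b v z0 zs zl) (hn : 0 < (S a).length) :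
    zl.length ≤ (S a).length := by
  obtain ⟨x, rfl | rfl, hx⟩ := hP.2.2.2
  · exact hx.length_le
  · have := hx.length_le
    simp only [List.length_singleton] at this
    omega

theorem IsBlockStart.mem_cuts (hc : IsBlockStart S a z0 zs c) : c ∈ cuts z0 zs := by
  obtain ⟨i, hi, rfl⟩ := hc
  exact ⟨i, (List.getElem?_eq_some_iff.1 hi).1.le, rfl⟩

theorem IsBlockStart.prefix_drop (hc : IsBlockStart S a z0 zs c)
    (hP : IsOnePart S a b v z0 zs zl) : S a <+: v.drop c := by
  obtain ⟨i, hi, rfl⟩ := hc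
  exact prefix_drop_cutPos hP.1 hi

theorem IsBlockStart.getElem?_add (hc : IsBlockStart S a z0 zs c)
    (hP : IsOnePart S a b v z0 zs zl) (ho : o < (S a).length) : v[c + o]? = (S a)[o]? :=
  getElem?_add_of_prefix_drop (hc.prefix_drop hP) ho

theorem IsOnePart.exists_block (hP : IsOnePart S a b v z0 zs zl) (hn : 0 < (S a).length)
    (hx : (S a).length ≤ x) (hx' : x + (S a).length < v.length) :
    (x ∈ cuts z0 zs ∧ v[x]? = some b) ∨
      ∃ c o, IsBlockStart S a z0 zs c ∧ c + o = x ∧ o < (S a).length := by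
  have h0 : cutPos z0 zs 0 ≤ x := by
    simpa [cutPos] using (hP.length_z0_le hn).trans hx
  have hN : x < cutPos z0 zs zs.length := by
    have hlen := congrArg List.length hP.1
    have := hP.length_zl_le hn
    simp only [List.length_append] at hlen
    simp only [cutPos, List.take_length]
    omega
  obtain ⟨i, hi, hle, hlt⟩ := exists_le_lt_succ h0 hN
  have hzi : zs[i]? = some zs[i] := List.getElem?_eq_getElem hi
  rw [cutPos_add_one hzi] at hlt
  rcases hP.mem_blocks (List.getElem_mem hi) with h | h <;> rw [h] at hzi hlt
  · exact Or.inr ⟨_, x - cutPos z0 zs i, ⟨i, hzi, rfl⟩, by omega, by omega⟩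
  · have hxi : cutPos z0 zs i = x := by simp at hlt; omega
    refine Or.inl ⟨⟨i, hi.le, hxi.symm⟩, ?_⟩
    simpa [hxi] using getElem?_add_of_prefix_drop (prefix_drop_cutPos hP.1 hzi) (o := 0) (by simp)

theorem IsOnePart.exists_isBlockStart_of_getElem? (hP : IsOnePart S a b v z0 zs zl) (hab : a ≠ b)
    (hn : 0 < (S a).length) (hx : (S a).length ≤ x) (hx' : x + (S a).length < v.length)
    (hvx : v[x]? = some a) :
    ∃ c o, IsBlockStart S a z0 zs c ∧ c + o = x ∧ (S a)[o]? = some a := by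
  rcases hP.exists_block hn hx hx' with ⟨-, hb⟩ | ⟨c, o, hc, rfl, ho⟩
  · exact absurd (Option.some_injective _ (hvx.symm.trans hb)) hab
  · exact ⟨c, o, hc, rfl, (hc.getElem?_add hP ho).symm.trans hvx⟩

variable [DecidableEq A]

theorem IsOnePart.count_take_cutPos_modEq (hP : IsOnePart S a b v z0 zs zl) (hab : a ≠ b)
    (i : ℕ) : (v.take (cutPos z0 zs i)).count a ≡ z0.count a [MOD (S a).count a] := by
  have hdvd : (S a).count a ∣ (zs.take i).flatten.count a := by
    rw [List.count_flatten]
    refine List.dvd_sum fun x hx => ?_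
    obtain ⟨z, hz, rfl⟩ := List.mem_map.1 hx
    rcases hP.mem_blocks (List.mem_of_mem_take hz) with rfl | rfl
    · exact dvd_rfl
    · simp [Ne.symm hab]
  rw [take_cutPos hP.1, List.count_append]
  simpa using (Nat.modEq_zero_iff_dvd.2 hdvd).add_left (z0.count a)

theorem IsOnePart.count_take_modEq_of_mem_cuts (hP : IsOnePart S a b v z0 zs zl) (hab : a ≠ b)
    (hp : p ∈ cuts z0 zs) : (v.take p).count a ≡ z0.count a [MOD (S a).count a] := by
  obtain ⟨i, -, rfl⟩ := hp
  exact hP.count_take_cutPos_modEq hab i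

theorem IsBlockStart.count_take_modEq (hc : IsBlockStart S a z0 zs c)
    (hP : IsOnePart S a b v z0 zs zl) (hab : a ≠ b) :
    (v.take c).count a ≡ z0.count a [MOD (S a).count a] :=
  hP.count_take_modEq_of_mem_cuts hab hc.mem_cuts

theorem IsBlockStart.count_take_add (hc : IsBlockStart S a z0 zs c)
    (hP : IsOnePart S a b v z0 zs zl) (ho : o ≤ (S a).length) :
    (v.take (c + o)).count a = (v.take c).count a + ((S a).take o).count a := by
  rw [take_add_of_prefix_drop (hc.prefix_drop hP) ho, List.count_append]

/-- The offset of an `a` in its `u`-block is read off the residue of the number of `a`'s before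
it, since distinct `a`'s of `u` are preceded by distinct numbers of `a`'s. -/
theorem IsOnePart.exists_isBlockStart_of_modEq (hP : IsOnePart S a b v z0 zs zl) (hab : a ≠ b)
    (hx : (S a).length ≤ x) (hx' : x + (S a).length < v.length) (hvx : v[x]? = some a)
    (ho : (S a)[o]? = some a)
    (hmod : (v.take x).count a ≡ z0.count a + ((S a).take o).count a [MOD (S a).count a]) :
    ∃ c, IsBlockStart S a z0 zs c ∧ c + o = x := by
  have hn : 0 < (S a).length := by
    have := (List.getElem?_eq_some_iff.1 ho).1; omega
  obtain ⟨c, o', hc, rfl, ho'⟩ := hP.exists_isBlockStart_of_getElem? hab hn hx hx' hvx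
  have hcount := hc.count_take_add hP (List.getElem?_eq_some_iff.1 ho').1.le
  have : ((S a).take o').count a = ((S a).take o).count a := by
    refine Nat.ModEq.eq_of_lt_of_lt ?_ (count_take_lt_count ho' le_rfl)
      (count_take_lt_count ho le_rfl)
    refine Nat.ModEq.add_left_cancel' (z0.count a) ?_
    calc z0.count a + ((S a).take o').count a
        ≡ (v.take c).count a + ((S a).take o').count a [MOD (S a).count a] :=
          (hc.count_take_modEq hP hab).symm.add_right _
      _ = (v.take (c + o')).count a := hcount.symm
      _ ≡ z0.count a + ((S a).take o).count a [MOD (S a).count a] := hmod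
  exact ⟨c, hc, by rw [eq_of_count_take_eq ho' ho this]⟩

/-- A cut of a 1-partition inside a `u`-block of another would be preceded by a number of
`a`'s of a different residue, because `u` begins and ends with `a`. -/
theorem IsOnePart.mem_cuts_of_modEq (hP : IsOnePart S a b v z0 zs zl)
    (hP' : IsOnePart S a b v z0' zs' zl') (hab : a ≠ b) (hhead : (S a).head? = some a)
    (hlast : (S a).getLast? = some a) (hres : z0.count a ≡ z0'.count a [MOD (S a).count a])
    (hp : (S a).length ≤ p) (hp' : p + (S a).length < v.length) (h : p ∈ cuts z0 zs) :
    p ∈ cuts z0' zs' := by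
  have hn : 0 < (S a).length := List.length_pos_iff.2 (by rintro h; simp [h] at hhead)
  rcases hP'.exists_block hn hp hp' with ⟨h', -⟩ | ⟨c, o, hc, rfl, ho⟩
  · exact h'
  rcases Nat.eq_zero_or_pos o with rfl | ho0
  · exact hc.mem_cuts
  have hκ : ((S a).take o).count a ≡ 0 [MOD (S a).count a] := by
    refine Nat.ModEq.add_left_cancel' ((v.take c).count a) ?_
    rw [add_zero, ← hc.count_take_add hP' ho.le]
    exact (hP.count_take_modEq_of_mem_cuts hab h).trans
      (hres.trans (hc.count_take_modEq hP' hab).symm)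
  have hlt := count_take_lt_count (List.getLast?_eq_getElem? ▸ hlast)
    (by omega : o ≤ (S a).length - 1)
  have hpos := count_take_pos hhead ho0
  rw [Nat.ModEq, Nat.zero_mod, Nat.mod_eq_of_lt hlt] at hκ
  omega

/-- When the residues differ, the last `a` of a block of the first partition sits at an offset
`o < |u| - 1` of a block of the second; after it `u` continues with `b^k a`. -/
theorem IsOnePart.exists_offset_of_not_modEq (hP : IsOnePart S a b v z0 zs zl)
    (hP' : IsOnePart S a b v z0' zs' zl') (hab : a ≠ b) (hcover : ∀ x : A, x = a ∨ x = b)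
    (hlast : (S a).getLast? = some a)
    (hres : ¬ z0.count a ≡ z0'.count a [MOD (S a).count a])
    (hc : IsBlockStart S a z0 zs c) (hc0 : 0 < c) (hcv : c + 2 * (S a).length ≤ v.length) :
    ∃ o k, (S a)[o]? = some a ∧
      z0.count a ≡ z0'.count a + ((S a).take (o + 1)).count a [MOD (S a).count a] ∧
      List.replicate k b ++ [a] <+: (S a).drop (o + 1) := by
  have hlast' : (S a)[(S a).length - 1]? = some a := List.getLast?_eq_getElem? ▸ hlast
  have hn : 0 < (S a).length := by
    have := (List.getElem?_eq_some_iff.1 hlast').1; omega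
  have hy : v[c + ((S a).length - 1)]? = some a := (hc.getElem?_add hP (by omega)).trans hlast'
  obtain ⟨c', o, hc', hco, ho⟩ :=
    hP'.exists_isBlockStart_of_getElem? hab hn (by omega) (by omega) hy
  have hcount := hc.count_take_add hP (o := (S a).length - 1) (by omega)
  have hcount' := hc'.count_take_add hP' (List.getElem?_eq_some_iff.1 ho).1.le
  rw [hco] at hcount'
  have hmod : z0.count a ≡ z0'.count a + ((S a).take (o + 1)).count a [MOD (S a).count a] :=
    calc z0.count a ≡ (v.take c).count a [MOD (S a).count a] := (hc.count_take_modEq hP hab).symm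
      _ ≡ (v.take c).count a + (S a).count a [MOD (S a).count a] := (Nat.add_mod_right _ _).symm
      _ = (v.take c').count a + ((S a).take (o + 1)).count a := by
          have := count_take_length_sub_one_add_one hlast
          rw [count_take_add_one ho]
          omega
      _ ≡ z0'.count a + ((S a).take (o + 1)).count a [MOD (S a).count a] :=
          (hc'.count_take_modEq hP' hab).add_right _
  have ho1 : o + 1 < (S a).length := by
    have := (List.getElem?_eq_some_iff.1 ho).1
    by_contra hge
    rw [show o + 1 = (S a).length by omega, List.take_length] at hmod
    exact hres (hmod.trans (Nat.add_mod_right _ _))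
  obtain ⟨k, hk⟩ := exists_replicate_append_prefix_drop hcover hlast ho1
  exact ⟨o, k, ho, hmod, hk⟩

theorem IsOnePart.replicate_append_prefix_drop (hP : IsOnePart S a b v z0 zs zl)
    (hP' : IsOnePart S a b v z0' zs' zl') (hab : a ≠ b) (hlast : (S a).getLast? = some a)
    {k : ℕ} (ho : (S a)[o]? = some a)
    (hmod : z0.count a ≡ z0'.count a + ((S a).take (o + 1)).count a [MOD (S a).count a])
    (hk : List.replicate k b ++ [a] <+: (S a).drop (o + 1))
    (hc : IsBlockStart S a z0 zs c) (hc0 : 0 < c) (hcv : c + 2 * (S a).length ≤ v.length) :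
    List.replicate k b ++ [a] <+: v.drop (c + (S a).length) := by
  have hkn := add_lt_length_of_replicate_append_prefix_drop hk
  have hy : v[c + ((S a).length - 1)]? = some a :=
    (hc.getElem?_add hP (by omega)).trans (List.getLast?_eq_getElem? ▸ hlast)
  have hmody : (v.take (c + ((S a).length - 1))).count a ≡
      z0'.count a + ((S a).take o).count a [MOD (S a).count a] := by
    refine Nat.ModEq.add_right_cancel' 1 ?_
    rw [hc.count_take_add hP (by omega), add_assoc, count_take_length_sub_one_add_one hlast,
      add_assoc, ← count_take_add_one ho]
    exact (Nat.add_mod_right _ _).trans ((hc.count_take_modEq hP hab).trans hmod)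
  obtain ⟨c', hc', hc'o⟩ :=
    hP'.exists_isBlockStart_of_modEq hab (by omega) (by omega) hy ho hmody
  have := prefix_drop_add_of_prefix_drop (hc'.prefix_drop hP') (o + 1)
  rw [show c' + (o + 1) = c + (S a).length by omega] at this
  exact hk.trans this

theorem IsOnePart.prefix_drop_and_isBlockStart_add (hP : IsOnePart S a b v z0 zs zl)
    (hP' : IsOnePart S a b v z0' zs' zl') (hab : a ≠ b) (hhead : (S a).head? = some a)
    (hlast : (S a).getLast? = some a) {k : ℕ} (ho : (S a)[o]? = some a)
    (hmod : z0.count a ≡ z0'.count a + ((S a).take (o + 1)).count a [MOD (S a).count a])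
    (hk : List.replicate k b ++ [a] <+: (S a).drop (o + 1))
    (hc : IsBlockStart S a z0 zs c) (hc0 : 0 < c) (hcv : c + 3 * (S a).length ≤ v.length) :
    S a ++ List.replicate k b <+: v.drop c ∧
      IsBlockStart S a z0 zs (c + ((S a).length + k)) := by
  have hkn := add_lt_length_of_replicate_append_prefix_drop hk
  have hbk := hP.replicate_append_prefix_drop hP' hab hlast ho hmod hk hc hc0 (by omega)
  have hpre : S a ++ List.replicate k b <+: v.drop c := by
    rw [drop_eq_append_of_prefix_drop (hc.prefix_drop hP)]
    exact List.prefix_append_right_inj (S a) |>.2 ((List.prefix_append _ _).trans hbk)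
  refine ⟨hpre, ?_⟩
  have hx : v[c + ((S a).length + k)]? = some a := by
    rw [← add_assoc, getElem?_add_of_prefix_drop hbk (by simp)]
    simp
  have hmodx : (v.take (c + ((S a).length + k))).count a ≡
      z0.count a + ((S a).take 0).count a [MOD (S a).count a] := by
    rw [take_add_of_prefix_drop hpre (by simp),
      List.take_of_length_le (l := S a ++ List.replicate k b) (by simp), List.count_append,
      List.count_append, List.count_replicate, if_neg (by simpa using Ne.symm hab),
      List.take_zero, List.count_nil, add_zero, add_zero]
    exact (Nat.add_mod_right _ _).trans (hc.count_take_modEq hP hab)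
  obtain ⟨d, hd, rfl⟩ := hP.exists_isBlockStart_of_modEq hab (by omega) (by omega) hx
    (List.head?_eq_getElem? ▸ hhead) hmodx
  exact hd

theorem IsOnePart.flatten_replicate_prefix_drop (hP : IsOnePart S a b v z0 zs zl)
    (hP' : IsOnePart S a b v z0' zs' zl') (hab : a ≠ b) (hhead : (S a).head? = some a)
    (hlast : (S a).getLast? = some a) {k : ℕ} (ho : (S a)[o]? = some a)
    (hmod : z0.count a ≡ z0'.count a + ((S a).take (o + 1)).count a [MOD (S a).count a])
    (hk : List.replicate k b ++ [a] <+: (S a).drop (o + 1)) (m : ℕ) :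
    ∀ c, IsBlockStart S a z0 zs c → 0 < c →
      c + m * ((S a).length + k) + 3 * (S a).length ≤ v.length →
      (List.replicate m (S a ++ List.replicate k b)).flatten <+: v.drop c := by
  induction m with
  | zero => intro c _ _ _; simp
  | succ m ih =>
    intro c hc hc0 hcv
    rw [Nat.succ_mul] at hcv
    obtain ⟨hpre, hnext⟩ :=
      hP.prefix_drop_and_isBlockStart_add hP' hab hhead hlast ho hmod hk hc hc0 (by omega)
    rw [List.replicate_succ, List.flatten_cons, drop_eq_append_of_prefix_drop hpre]
    refine List.prefix_append_right_inj _ |>.2 ?_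
    simpa using ih _ hnext (by omega) (by omega)

theorem IsOnePart.exists_flatten_replicate_infix (hP : IsOnePart S a b v z0 zs zl)
    (hP' : IsOnePart S a b v z0' zs' zl') (hab : a ≠ b) (hcover : ∀ x : A, x = a ∨ x = b)
    (hhead : (S a).head? = some a) (hlast : (S a).getLast? = some a) (m : ℕ)
    (hp : (2 * m + 4) * (S a).length ≤ p) (hp' : p + (2 * m + 4) * (S a).length ≤ v.length)
    (h : p ∈ cuts z0 zs) (h' : p ∉ cuts z0' zs') :
    ∃ k < (S a).length, (List.replicate m (S a ++ List.replicate k b)).flatten <:+: v := by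
  have hn : 0 < (S a).length := List.length_pos_iff.2 (by rintro h; simp [h] at hhead)
  have hp4 : 4 * (S a).length ≤ p := by nlinarith
  have hp4' : p + 4 * (S a).length ≤ v.length := by nlinarith
  have hres : ¬ z0'.count a ≡ z0.count a [MOD (S a).count a] := fun hres =>
    h' (hP.mem_cuts_of_modEq hP' hab hhead hlast hres.symm (by omega) (by omega) h)
  obtain ⟨c, hc, hcp, hpc⟩ :
      ∃ c, IsBlockStart S a z0' zs' c ∧ c ≤ p ∧ p < c + (S a).length := by
    rcases hP'.exists_block hn (x := p) (by omega) (by omega) with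
      ⟨h'', -⟩ | ⟨c, o, hc, rfl, ho⟩
    · exact absurd h'' h'
    · exact ⟨c, hc, by omega, by omega⟩
  obtain ⟨o, k, ho, hmod, hk⟩ :=
    hP'.exists_offset_of_not_modEq hP hab hcover hlast hres hc (by omega) (by omega)
  have hkn := add_lt_length_of_replicate_append_prefix_drop hk
  have hmk : m * ((S a).length + k) ≤ 2 * m * (S a).length := by nlinarith
  refine ⟨k, by omega, ?_⟩
  exact (hP'.flatten_replicate_prefix_drop hP hab hhead hlast ho hmod hk m c hc (by omega)
    (by nlinarith)).isInfix.trans (List.drop_suffix c v).isInfix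

end OnePartition

theorem exists_forall_of_forall_exists_lt {P : ℕ → ℕ → Prop} {N : ℕ}
    (hmono : ∀ k m m', m ≤ m' → P k m' → P k m) (h : ∀ m, ∃ k < N, P k m) :
    ∃ k, ∀ m, P k m := by
  by_contra! hcon
  choose f hf using hcon
  obtain ⟨k, hk, hPk⟩ := h (∑ i ∈ Finset.range N, f i)
  exact hf k (hmono k _ _ (Finset.single_le_sum (by simp) (Finset.mem_range.2 hk)) hPk)

theorem statement19_general {A : Type*}
    (a b : A) (hab : a ≠ b) (hcover : ∀ x : A, x = a ∨ x = b)
    (S : A → List A) (hS : IsSubstSystem S) (hap : Aperiodic S) (hSb : S b = [b]) :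
    ∃ L : ℕ, ∀ v ∈ WS S, ∀ (z0 : List A) (zs : List (List A)) (zl : List A)
        (z0' : List A) (zs' : List (List A)) (zl' : List A),
      IsOnePart S a b v z0 zs zl → IsOnePart S a b v z0' zs' zl' →
      ∀ p : ℕ, L ≤ p → p + L ≤ v.length → (p ∈ cuts z0 zs ↔ p ∈ cuts z0' zs') := by
  classical
  obtain ⟨hhead, hlast⟩ := head?_eq_and_getLast?_eq hS hap hab hcover hSb
  by_contra! hcon
  have hpow : ∀ m, ∃ k < (S a).length,
      (List.replicate m (S a ++ List.replicate k b)).flatten ∈ WS S := by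
    intro m
    obtain ⟨v, hv, z0, zs, zl, z0', zs', zl', hP, hP', p, hp, hp', hne⟩ :=
      hcon ((2 * m + 4) * (S a).length)
    obtain ⟨k, hk, hinf⟩ : ∃ k < (S a).length,
        (List.replicate m (S a ++ List.replicate k b)).flatten <:+: v := by
      rcases hne with ⟨h, h'⟩ | ⟨h', h⟩
      · exact hP.exists_flatten_replicate_infix hP' hab hcover hhead hlast m hp hp' h h'
      · exact hP'.exists_flatten_replicate_infix hP hab hcover hhead hlast m hp hp' h h'
    exact ⟨k, hk, mem_WS_of_infix hinf hv⟩
  obtain ⟨k, hk⟩ := exists_forall_of_forall_exists_lt (fun k _ _ hm h => mem_WS_of_infix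
    (flatten_replicate_prefix_flatten_replicate (S a ++ List.replicate k b) hm).isInfix h) hpow
  exact not_aperiodic_of_forall_flatten_replicate_mem
    (List.append_ne_nil_of_left_ne_nil (List.ne_nil_of_mem (List.mem_of_mem_head? hhead)) _)
    hk hap

/-- if `aa` does not occur in `S(a)`, there is `L ∈ ℕ` such that all
1-partitions of any `v ∈ W(S)` induce the same 1-partition on the middle part
`v(L)⋯v(|v|-L)`. -/
theorem statement19 {A : Type*} [Fintype A] [TopologicalSpace A] [DiscreteTopology A]
    (a b : A) (hab : a ≠ b) (hcover : ∀ x : A, x = a ∨ x = b)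
    (S : A → List A) (hS : IsSubstSystem S) (hmin : Minimal S) (hap : Aperiodic S)
    (hnp : ¬ Primitive S) (hSa : 1 < (S a).length) (hSb : S b = [b])
    (hnoaa : ¬ ([a, a] <:+: S a)) :
    ∃ L : ℕ, ∀ v ∈ WS S, ∀ (z0 : List A) (zs : List (List A)) (zl : List A)
        (z0' : List A) (zs' : List (List A)) (zl' : List A),
      IsOnePart S a b v z0 zs zl → IsOnePart S a b v z0' zs' zl' →
      ∀ p : ℕ, L ≤ p → p + L ≤ v.length → (p ∈ cuts z0 zs ↔ p ∈ cuts z0' zs') :=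
  statement19_general a b hab hcover S hS hap hSb

end SubstLR
end
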